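/- arXiv:1706.03398 — 9 statements merged into one kernel-verified Lean document; each statement's English description precedes it below -/
import Mathlib

section
/- The cone C⁺ is invariant under K_{ab} for all positive integers a, b: if (u,v) ∈ ℝ² satisfies v > 0 and 0 ≤ u ≤ v/α, and (u',v') = K_{ab}(u,v) = (u + bβv, aαu + (1+aαbβ)v), then v' > 0 and 0 ≤ u' ≤ v'/α. -/
/-- Lemma 1 (invariant cone): the cone `C⁺ = {(u,v) : v > 0, 0 ≤ u ≤ v/α}` is invariant
under `K_{ab} = [[1, bβ], [aα, 1 + aαbβ]]` for all positive integers `a, b`. -/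
theorem cone_invariant (α β : ℝ) (hα : 1 ≤ α) (hβ : 1 ≤ β)
    (a b : ℕ) (ha : 1 ≤ a) (hb : 1 ≤ b)
    (u v : ℝ) (hv : 0 < v) (hu0 : 0 ≤ u) (hu1 : u ≤ v / α) :
    0 < a * α * u + (1 + a * α * (b * β)) * v ∧
      0 ≤ u + b * β * v ∧
      u + b * β * v ≤ (a * α * u + (1 + a * α * (b * β)) * v) / α := by
  have hα0 : (0:ℝ) < α := lt_of_lt_of_le one_pos hα
  have ha' : (1:ℝ) ≤ a := by exact_mod_cast ha
  have hb' : (1:ℝ) ≤ b := by exact_mod_cast hb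
  have ha0 : (0:ℝ) ≤ a := le_trans zero_le_one ha'
  have hb0 : (0:ℝ) ≤ b := le_trans zero_le_one hb'
  have hβ0 : (0:ℝ) ≤ β := le_trans zero_le_one hβ
  have h1 : (0:ℝ) ≤ a * α * u := mul_nonneg (mul_nonneg ha0 hα0.le) hu0
  have h2 : (0:ℝ) ≤ a * α * (b * β) := mul_nonneg (mul_nonneg ha0 hα0.le) (mul_nonneg hb0 hβ0)
  have h3 : (0:ℝ) ≤ b * β * v := mul_nonneg (mul_nonneg hb0 hβ0) hv.le
  have huα : u * α ≤ v := (le_div_iff₀ hα0).mp hu1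
  refine ⟨?_, ?_, ?_⟩
  · nlinarith
  · linarith
  · rw [le_div_iff₀ hα0]
    nlinarith [mul_nonneg (mul_nonneg (sub_nonneg.2 ha') hα0.le) hu0,
      mul_nonneg (mul_nonneg (mul_nonneg (sub_nonneg.2 ha') hα0.le)
        (mul_nonneg (le_trans zero_le_one hb') (le_trans zero_le_one hβ))) hv.le,
      mul_nonneg (mul_nonneg (sub_nonneg.2 hα) (mul_nonneg (le_trans zero_le_one hb') (le_trans zero_le_one hβ))) hv.le]
end

section
/- For every vector X = (u,v) with v > 0 and 0 ≤ u ≤ v/α, and all positive integers a, b: 1 + (α/(1+α))(a + bβ + aαbβ) ≤ ‖K_{ab}X‖₁ / ‖X‖₁ ≤ 1 + bβ + aαbβ. -/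
/-- Lemma 2 (`L₁` bounds): for `X = (u,v)` in the cone `C⁺` and positive integers `a, b`,
`1 + (α/(1+α))(a + bβ + aαbβ) ≤ ‖K_{ab}X‖₁/‖X‖₁ ≤ 1 + bβ + aαbβ`,
where `K_{ab}X = (u + bβv, aαu + (1 + aαbβ)v)` and `‖(u,v)‖₁ = |u| + |v|`. -/
theorem L1_bounds (α β : ℝ) (hα : 1 ≤ α) (hβ : 1 ≤ β)
    (a b : ℕ) (ha : 1 ≤ a) (hb : 1 ≤ b)
    (u v : ℝ) (hv : 0 < v) (hu0 : 0 ≤ u) (hu1 : u ≤ v / α) :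
    1 + α / (1 + α) * (a + b * β + a * α * (b * β)) ≤
        (|u + b * β * v| + |a * α * u + (1 + a * α * (b * β)) * v|) / (|u| + |v|) ∧
      (|u + b * β * v| + |a * α * u + (1 + a * α * (b * β)) * v|) / (|u| + |v|) ≤
        1 + b * β + a * α * (b * β) := by
  have hα0 : (0:ℝ) < α := lt_of_lt_of_le one_pos hα
  have hαu : α * u ≤ v := by
    have h := (le_div_iff₀ hα0).mp hu1
    linarith [h, mul_comm u α]
  have hA : (1:ℝ) ≤ (a:ℝ) := by exact_mod_cast ha
  have hB : (1:ℝ) ≤ (b:ℝ) := by exact_mod_cast hb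
  have hbβ : (1:ℝ) ≤ (b:ℝ) * β := one_le_mul_of_one_le_of_one_le hB hβ
  have haα : (1:ℝ) ≤ (a:ℝ) * α := one_le_mul_of_one_le_of_one_le hA hα
  have h1 : |u + (b:ℝ) * β * v| = u + (b:ℝ) * β * v := abs_of_nonneg (by nlinarith)
  have h2 : |(a:ℝ) * α * u + (1 + (a:ℝ) * α * ((b:ℝ) * β)) * v|
      = (a:ℝ) * α * u + (1 + (a:ℝ) * α * ((b:ℝ) * β)) * v := by
    apply abs_of_nonneg
    have hx : (0:ℝ) ≤ (a:ℝ) * α * u := mul_nonneg (by linarith) hu0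
    nlinarith [mul_nonneg (by nlinarith : (0:ℝ) ≤ (a:ℝ) * α * ((b:ℝ) * β)) hv.le]
  have h3 : |u| = u := abs_of_nonneg hu0
  have h4 : |v| = v := abs_of_nonneg hv.le
  rw [h1, h2, h3, h4]
  have hden : (0:ℝ) < u + v := by linarith
  have h1α : (0:ℝ) < 1 + α := by linarith
  constructor
  · rw [le_div_iff₀ hden, add_mul, one_mul]
    have h5 : α / (1 + α) * ((a:ℝ) + (b:ℝ) * β + (a:ℝ) * α * ((b:ℝ) * β)) * (u + v) ≤
        (u + (b:ℝ) * β * v + ((a:ℝ) * α * u + (1 + (a:ℝ) * α * ((b:ℝ) * β)) * v)) - (u + v) := by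
      rw [div_mul_eq_mul_div, div_mul_eq_mul_div, div_le_iff₀ h1α]
      nlinarith [mul_nonneg (sub_nonneg.mpr hαu)
        (by nlinarith : (0:ℝ) ≤ (b:ℝ) * β + (a:ℝ) * α * ((b:ℝ) * β) - (a:ℝ) * α)]
    linarith
  · rw [div_le_iff₀ hden]
    nlinarith [mul_nonneg hu0
      (by nlinarith : (0:ℝ) ≤ (b:ℝ) * β + (a:ℝ) * α * ((b:ℝ) * β) - (a:ℝ) * α)]
end

section
/- For every vector X = (u,v) with v > 0 and 0 ≤ u ≤ v/α, and all positive integers a, b: min{ (1+aαbβ)² + b²β², (α²(1+a+aαbβ)² + (1+αbβ)²)/(1+α²) } ≤ ‖K_{ab}X‖₂² / ‖X‖₂² ≤ ½(2 + C + (C(C+4))^{1/2}), where C = (aα+bβ)² + (aαbβ)². -/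
/-- Lower bound: the Rayleigh quotient of `K_{ab}ᵀK_{ab}` on the cone is at least the
minimum of its values at the two boundary rays, stated with `p = aα`, `q = bβ`. -/
lemma L2_aux_lower (α p q u v : ℝ) (hα : 1 ≤ α) (hp : 1 ≤ p) (hq : 1 ≤ q)
    (hv : 0 < v) (hu0 : 0 ≤ u) (hu1 : α * u ≤ v) :
    min ((1 + p * q) ^ 2 + q ^ 2)
        (((α + p + α * (p * q)) ^ 2 + (1 + α * q) ^ 2) / (1 + α ^ 2)) ≤
      ((u + q * v) ^ 2 + (p * u + (1 + p * q) * v) ^ 2) / (u ^ 2 + v ^ 2) := by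
  have hW : (0:ℝ) < u ^ 2 + v ^ 2 := by positivity
  have hp0 : (0:ℝ) < p := by linarith
  have hq0 : (0:ℝ) < q := by linarith
  have hmv2 : (0:ℝ) < (q + p + p ^ 2 * q) * v ^ 2 := by positivity
  have hmu2 : (0:ℝ) ≤ (q + p + p ^ 2 * q) * u ^ 2 := by positivity
  by_cases hc : (q ^ 2 * (1 + p ^ 2) + 2 * p * q - p ^ 2) * u * v ≤ (q + p + p ^ 2 * q) * (v ^ 2 - u ^ 2)
  · refine le_trans (min_le_left _ _) ?_
    rw [le_div_iff₀ hW]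
    have h2 : 0 ≤ 2 * (q + p + p ^ 2 * q) * v - (q ^ 2 * (1 + p ^ 2) + 2 * p * q - p ^ 2) * u := by
      nlinarith [hc, hmv2, hmu2, hv]
    nlinarith [mul_nonneg hu0 h2]
  · push_neg at hc
    refine le_trans (min_le_right _ _) ?_
    rw [div_le_div_iff₀ (by positivity) hW]
    have hu : 0 < u := by
      rcases eq_or_lt_of_le hu0 with h | h
      · exfalso
        rw [← h] at hc
        nlinarith [hmv2]
      · exact h
    have hf2 : 0 ≤ (q ^ 2 * (1 + p ^ 2) + 2 * p * q - p ^ 2) * (α * u + v) - 2 * (q + p + p ^ 2 * q) * (α * v - u) := by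
      have h3 : 0 ≤ ((q ^ 2 * (1 + p ^ 2) + 2 * p * q - p ^ 2) * (α * u + v) - 2 * (q + p + p ^ 2 * q) * (α * v - u)) * (u * v) := by
        nlinarith [mul_le_mul_of_nonneg_right hc.le (by nlinarith : (0:ℝ) ≤ α * u + v),
          mul_nonneg (mul_nonneg (by positivity : (0:ℝ) ≤ (q + p + p ^ 2 * q))
            (by linarith : (0:ℝ) ≤ v - α * u)) (by positivity : (0:ℝ) ≤ v ^ 2 + u ^ 2)]
      nlinarith [h3, mul_pos hu hv]
    nlinarith [mul_nonneg (by linarith : (0:ℝ) ≤ v - α * u) hf2]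

/-- Upper bound: the Rayleigh quotient is at most the top eigenvalue of `KᵀK`. -/
lemma L2_aux_upper (p q u v : ℝ) (hW : (0:ℝ) < u ^ 2 + v ^ 2) :
    ((u + q * v) ^ 2 + (p * u + (1 + p * q) * v) ^ 2) / (u ^ 2 + v ^ 2) ≤
      (2 + ((p + q) ^ 2 + (p * q) ^ 2) +
        Real.sqrt (((p + q) ^ 2 + (p * q) ^ 2) *
          (((p + q) ^ 2 + (p * q) ^ 2) + 4))) / 2 := by
  have key : (2 * ((u + q * v) ^ 2 + (p * u + (1 + p * q) * v) ^ 2) - (2 + ((p + q) ^ 2 + (p * q) ^ 2)) * (u ^ 2 + v ^ 2)) ^ 2 ≤ ((p + q) ^ 2 + (p * q) ^ 2) * (((p + q) ^ 2 + (p * q) ^ 2) + 4) * (u ^ 2 + v ^ 2) ^ 2 := by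
    nlinarith [sq_nonneg (((1 + p ^ 2) - (q ^ 2 + (1 + p * q) ^ 2)) * (2 * u * v)
      - 2 * (q + p + p ^ 2 * q) * (u ^ 2 - v ^ 2))]
  have h1 : ∀ x : ℝ, x ≤ Real.sqrt (x ^ 2) := fun x => by
    rw [Real.sqrt_sq_eq_abs]; exact le_abs_self x
  have h2 : Real.sqrt ((2 * ((u + q * v) ^ 2 + (p * u + (1 + p * q) * v) ^ 2) - (2 + ((p + q) ^ 2 + (p * q) ^ 2)) * (u ^ 2 + v ^ 2)) ^ 2) ≤
      Real.sqrt (((p + q) ^ 2 + (p * q) ^ 2) * (((p + q) ^ 2 + (p * q) ^ 2) + 4) * (u ^ 2 + v ^ 2) ^ 2) :=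
    Real.sqrt_le_sqrt key
  have h3 : Real.sqrt (((p + q) ^ 2 + (p * q) ^ 2) * (((p + q) ^ 2 + (p * q) ^ 2) + 4) * (u ^ 2 + v ^ 2) ^ 2) =
      Real.sqrt (((p + q) ^ 2 + (p * q) ^ 2) * (((p + q) ^ 2 + (p * q) ^ 2) + 4)) * (u ^ 2 + v ^ 2) := by
    rw [Real.sqrt_mul (by positivity), Real.sqrt_sq (by positivity)]
  have hfin : 2 * ((u + q * v) ^ 2 + (p * u + (1 + p * q) * v) ^ 2) - (2 + ((p + q) ^ 2 + (p * q) ^ 2)) * (u ^ 2 + v ^ 2) ≤ Real.sqrt (((p + q) ^ 2 + (p * q) ^ 2) * (((p + q) ^ 2 + (p * q) ^ 2) + 4)) * (u ^ 2 + v ^ 2) := by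
    calc 2 * ((u + q * v) ^ 2 + (p * u + (1 + p * q) * v) ^ 2) - (2 + ((p + q) ^ 2 + (p * q) ^ 2)) * (u ^ 2 + v ^ 2) ≤ _ := h1 _
      _ ≤ _ := h2
      _ = _ := h3
  rw [div_le_div_iff₀ hW (by norm_num)]
  nlinarith [hfin]

/-- Lemma 3 (`L₂` bounds): for `X = (u,v)` in the cone `C⁺` and positive integers `a, b`,
`min{(1+aαbβ)² + b²β², (α²(1+a+aαbβ)² + (1+αbβ)²)/(1+α²)} ≤ ‖K_{ab}X‖₂²/‖X‖₂²
  ≤ ½(2 + C + √(C(C+4)))` where `C = (aα+bβ)² + (aαbβ)²`,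
`K_{ab}X = (u + bβv, aαu + (1 + aαbβ)v)` and `‖(u,v)‖₂² = u² + v²`. -/
theorem L2_bounds (α β : ℝ) (hα : 1 ≤ α) (hβ : 1 ≤ β)
    (a b : ℕ) (ha : 1 ≤ a) (hb : 1 ≤ b)
    (u v : ℝ) (hv : 0 < v) (hu0 : 0 ≤ u) (hu1 : u ≤ v / α) :
    min ((1 + a * α * (b * β)) ^ 2 + (b : ℝ) ^ 2 * β ^ 2)
        ((α ^ 2 * (1 + a + a * α * (b * β)) ^ 2 + (1 + α * (b * β)) ^ 2) / (1 + α ^ 2)) ≤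
      ((u + b * β * v) ^ 2 + (a * α * u + (1 + a * α * (b * β)) * v) ^ 2) / (u ^ 2 + v ^ 2) ∧
    ((u + b * β * v) ^ 2 + (a * α * u + (1 + a * α * (b * β)) * v) ^ 2) / (u ^ 2 + v ^ 2) ≤
      (2 + ((a * α + b * β) ^ 2 + (a * α * (b * β)) ^ 2) +
        Real.sqrt (((a * α + b * β) ^ 2 + (a * α * (b * β)) ^ 2) *
          (((a * α + b * β) ^ 2 + (a * α * (b * β)) ^ 2) + 4))) / 2 := by
  have hα0 : (0:ℝ) < α := by linarith
  have ha1 : (1:ℝ) ≤ (a:ℝ) := by exact_mod_cast ha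
  have hb1 : (1:ℝ) ≤ (b:ℝ) := by exact_mod_cast hb
  have hp : (1:ℝ) ≤ (a:ℝ) * α := by nlinarith
  have hq : (1:ℝ) ≤ (b:ℝ) * β := by nlinarith
  have hu1' : α * u ≤ v := by
    rw [le_div_iff₀ hα0] at hu1; linarith
  constructor
  · have h := L2_aux_lower α ((a:ℝ) * α) ((b:ℝ) * β) u v hα hp hq hv hu0 hu1'
    convert h using 2 <;> ring
  · exact L2_aux_upper ((a:ℝ) * α) ((b:ℝ) * β) u v (by positivity)
end

section
/- For every vector X = (u,v) with v > 0 and 0 ≤ u ≤ v/α, and all positive integers a, b: 1 + aαbβ ≤ ‖K_{ab}X‖_∞ / ‖X‖_∞ ≤ 1 + a + aαbβ. -/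
/-- Lemma 4 (`L∞` bounds): for `X = (u,v)` in the cone `C⁺` and positive integers `a, b`,
`1 + aαbβ ≤ ‖K_{ab}X‖∞/‖X‖∞ ≤ 1 + a + aαbβ`, where
`K_{ab}X = (u + bβv, aαu + (1 + aαbβ)v)` and `‖(u,v)‖∞ = max(|u|,|v|)`. -/
theorem Linf_bounds (α β : ℝ) (hα : 1 ≤ α) (hβ : 1 ≤ β)
    (a b : ℕ) (ha : 1 ≤ a) (hb : 1 ≤ b)
    (u v : ℝ) (hv : 0 < v) (hu0 : 0 ≤ u) (hu1 : u ≤ v / α) :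
    1 + a * α * (b * β) ≤
        max |u + b * β * v| |a * α * u + (1 + a * α * (b * β)) * v| / max |u| |v| ∧
      max |u + b * β * v| |a * α * u + (1 + a * α * (b * β)) * v| / max |u| |v| ≤
        1 + a + a * α * (b * β) := by
  have hαpos : (0:ℝ) < α := lt_of_lt_of_le one_pos hα
  have ha1 : (1:ℝ) ≤ (a:ℝ) := by exact_mod_cast ha
  have hb1 : (1:ℝ) ≤ (b:ℝ) := by exact_mod_cast hb
  have hA : (1:ℝ) ≤ a * α := by nlinarith
  have hB : (1:ℝ) ≤ b * β := by nlinarith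
  have huα : u * α ≤ v := by
    rw [div_eq_mul_inv] at hu1
    calc u * α ≤ v * α⁻¹ * α := by nlinarith
    _ = v := by field_simp
  have huv : u ≤ v := by nlinarith
  have h1 : max |u| |v| = v := by
    rw [abs_of_nonneg hu0, abs_of_pos hv, max_eq_right huv]
  have hc1 : (0:ℝ) ≤ u + b * β * v := by nlinarith
  have hc2 : u + b * β * v ≤ a * α * u + (1 + a * α * (b * β)) * v := by nlinarith
  have h2 : max |u + b * β * v| |a * α * u + (1 + a * α * (b * β)) * v|
      = a * α * u + (1 + a * α * (b * β)) * v := by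
    rw [abs_of_nonneg hc1, abs_of_nonneg (le_trans hc1 hc2), max_eq_right hc2]
  rw [h1, h2]
  constructor
  · rw [le_div_iff₀ hv]; nlinarith
  · rw [div_le_iff₀ hv]; nlinarith
end

section
/- Let C⁺ be the cone of vectors (u,v) with v > 0 and 0 ≤ u ≤ v/α. For positive integers a, b and (u,v) ∈ C⁺, write (u',v') = K_{ab}(u,v). Then: (1) if a = b, then v' > 0 and 0 ≤ u' ≤ v'·(1+αβ)/(2α+α²β); (2) if a > b, then v' > 0 and 0 ≤ u' ≤ v'·(1+αβ)/(3α+2α²β). -/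
/-- Cone improvement (positive case): for `(u,v)` in the cone `C⁺` and positive integers
`a, b`, writing `(u',v') = K_{ab}(u,v) = (u + bβv, aαu + (1 + aαbβ)v)`:
if `a = b` then `(u',v')` lies in the cone `0 ≤ u'/v' ≤ (1+αβ)/(2α+α²β)`, and
if `a > b` then `(u',v')` lies in the cone `0 ≤ u'/v' ≤ (1+αβ)/(3α+2α²β)`. -/
theorem cone_improvement (α β : ℝ) (hα : 1 ≤ α) (hβ : 1 ≤ β)
    (a b : ℕ) (ha : 1 ≤ a) (hb : 1 ≤ b)
    (u v : ℝ) (hv : 0 < v) (hu0 : 0 ≤ u) (hu1 : u ≤ v / α) :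
    (a = b →
      0 < a * α * u + (1 + a * α * (b * β)) * v ∧
        0 ≤ u + b * β * v ∧
        u + b * β * v ≤ (a * α * u + (1 + a * α * (b * β)) * v) *
          ((1 + α * β) / (2 * α + α ^ 2 * β))) ∧
    (b < a →
      0 < a * α * u + (1 + a * α * (b * β)) * v ∧
        0 ≤ u + b * β * v ∧
        u + b * β * v ≤ (a * α * u + (1 + a * α * (b * β)) * v) *
          ((1 + α * β) / (3 * α + 2 * α ^ 2 * β))) := by
  have hα0 : (0:ℝ) < α := lt_of_lt_of_le one_pos hα
  have hβ0 : (0:ℝ) < β := lt_of_lt_of_le one_pos hβ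
  have hA : (1:ℝ) ≤ (a : ℝ) := by exact_mod_cast ha
  have hB : (1:ℝ) ≤ (b : ℝ) := by exact_mod_cast hb
  have hαu : α * u ≤ v := by
    rw [div_eq_mul_inv] at hu1
    calc α * u ≤ α * (v * α⁻¹) := by
          exact mul_le_mul_of_nonneg_left hu1 (le_of_lt hα0)
      _ = v := by field_simp
  have hvpos : 0 < a * α * u + (1 + a * α * (b * β)) * v := by
    have h1 : 0 ≤ (a:ℝ) * α * u := by positivity
    have h2 : 0 < (1 + (a:ℝ) * α * (b * β)) * v := by positivity
    linarith
  have hupos : 0 ≤ u + (b:ℝ) * β * v := by positivity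
  constructor
  · intro hab
    refine ⟨hvpos, hupos, ?_⟩
    subst hab
    have hD : (0:ℝ) < 2 * α + α ^ 2 * β := by positivity
    rw [mul_div_assoc', le_div_iff₀ hD]
    nlinarith [mul_nonneg (sub_nonneg.2 hA) (mul_nonneg hα0.le hu0),
      mul_nonneg (sub_nonneg.2 hA) (mul_nonneg (mul_nonneg (sq_nonneg α) hβ0.le) hu0),
      mul_nonneg (mul_nonneg (sub_nonneg.2 hA) (sub_nonneg.2 hA))
        (mul_nonneg (mul_nonneg hα0.le hβ0.le) hv.le),
      mul_nonneg (mul_nonneg (mul_nonneg (sub_nonneg.2 hA) (le_trans zero_le_one hA))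
        (mul_nonneg (sq_nonneg α) (sq_nonneg β))) hv.le,
      sub_nonneg.2 hαu, mul_pos hα0 hβ0]
  · intro hab
    refine ⟨hvpos, hupos, ?_⟩
    have hA2 : (b:ℝ) + 1 ≤ (a:ℝ) := by exact_mod_cast hab
    have ha2 : (2:ℝ) ≤ (a:ℝ) := by linarith
    have hD : (0:ℝ) < 3 * α + 2 * α ^ 2 * β := by positivity
    rw [mul_div_assoc', le_div_iff₀ hD]
    nlinarith [mul_nonneg (sub_nonneg.2 ha2) (mul_nonneg hα0.le hu0),
      mul_nonneg (sub_nonneg.2 ha2) (mul_nonneg (mul_nonneg (sq_nonneg α) hβ0.le) hu0),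
      mul_nonneg (mul_nonneg (sq_nonneg ((b:ℝ) - 1)) (mul_nonneg hα0.le hβ0.le)) hv.le,
      mul_nonneg (mul_nonneg (mul_nonneg (sub_nonneg.2 (by linarith : (b:ℝ) ≤ (a:ℝ) - 1)) (le_trans zero_le_one hB))
        (mul_nonneg hα0.le hβ0.le)) hv.le,
      mul_nonneg (mul_nonneg (mul_nonneg (sub_nonneg.2 ha2) (le_trans zero_le_one hB))
        (mul_nonneg (sq_nonneg α) (sq_nonneg β))) hv.le,
      sub_nonneg.2 hαu, mul_pos hα0 hβ0]
end

section
/- Let α < −2, β > 2 and Γ = −β/2 + ((β/2)² + β/α)^{1/2}. For every vector X = (u,v) with v ≠ 0 and Γ ≤ u/v ≤ 0, and all positive integers a, b: −aαbβ − aαΓ − 1 ≤ ‖K_{ab}X‖_∞ / ‖X‖_∞ ≤ −aαbβ − 1. -/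
set_option maxHeartbeats 800000 in
/-- `L∞` bounds in the negative-shear case: for `α < -2`, `β > 2`,
`Γ = -β/2 + √((β/2)² + β/α)`, any `X = (u,v)` with `v ≠ 0` and `Γ ≤ u/v ≤ 0`, and
positive integers `a, b`:
`-aαbβ - aαΓ - 1 ≤ ‖K_{ab}X‖∞/‖X‖∞ ≤ -aαbβ - 1`, where
`K_{ab}X = (u + bβv, aαu + (1 + aαbβ)v)` and `‖(u,v)‖∞ = max(|u|,|v|)`. -/
theorem Linf_bounds_rev (α β : ℝ) (hα : α < -2) (hβ : 2 < β)
    (a b : ℕ) (ha : 1 ≤ a) (hb : 1 ≤ b)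
    (u v : ℝ) (hv : v ≠ 0)
    (hc1 : -(β / 2) + Real.sqrt ((β / 2) ^ 2 + β / α) ≤ u / v) (hc2 : u / v ≤ 0) :
    -(a * α * (b * β)) - a * α * (-(β / 2) + Real.sqrt ((β / 2) ^ 2 + β / α)) - 1 ≤
        max |u + b * β * v| |a * α * u + (1 + a * α * (b * β)) * v| / max |u| |v| ∧
      max |u + b * β * v| |a * α * u + (1 + a * α * (b * β)) * v| / max |u| |v| ≤
        -(a * α * (b * β)) - 1 := by
  have ha1 : (1:ℝ) ≤ (a:ℝ) := by exact_mod_cast ha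
  have hb1 : (1:ℝ) ≤ (b:ℝ) := by exact_mod_cast hb
  have hβ0 : (0:ℝ) < β := by linarith
  have hα0 : α < 0 := by linarith
  -- β/α > -β/2
  have hba : -(β/2) < β / α := by
    rw [lt_div_iff_of_neg hα0]
    nlinarith [mul_pos hβ0 (by linarith : (0:ℝ) < -α - 2)]
  set s : ℝ := Real.sqrt ((β / 2) ^ 2 + β / α) with hs
  have hslt : s < β / 2 := by
    have hlt : (β/2)^2 + β/α < (β/2)^2 := by
      have : β / α < 0 := div_neg_of_pos_of_neg hβ0 hα0
      linarith
    calc s < Real.sqrt ((β/2)^2) := Real.sqrt_lt_sqrt (by nlinarith) hlt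
      _ = β/2 := Real.sqrt_sq (by linarith : (0:ℝ) ≤ β/2)
  have hsgt : β / 2 - 1 < s := by
    have h1 : (0:ℝ) ≤ β/2 - 1 := by linarith
    exact (Real.lt_sqrt h1).mpr (by nlinarith)
  set Γ : ℝ := -(β / 2) + s with hΓ
  have hΓ1 : -1 < Γ := by rw [hΓ]; linarith
  set t : ℝ := u / v with ht
  have ht1 : -1 < t := lt_of_lt_of_le hΓ1 hc1
  have hueq : u = t * v := by rw [ht]; field_simp
  have hv0 : 0 < |v| := abs_pos.mpr hv
  -- denominator
  have hule : |u| ≤ |v| := by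
    rw [hueq, abs_mul]
    have h2 : |t| ≤ 1 := abs_le.mpr ⟨by linarith, by linarith⟩
    calc |t| * |v| ≤ 1 * |v| := mul_le_mul_of_nonneg_right h2 hv0.le
      _ = |v| := one_mul _
  have hden : max |u| |v| = |v| := max_eq_right hule
  set c : ℝ := (a:ℝ) * α with hcdef
  set d : ℝ := (b:ℝ) * β with hddef
  have hc : c ≤ α := by
    have := mul_le_mul_of_nonpos_right ha1 (le_of_lt hα0)
    rw [one_mul] at this
    exact this
  have hd : β ≤ d := le_mul_of_one_le_left hβ0.le hb1
  have htd : 1 < t + d := by linarith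
  have hctd2 : c * (t + d) ≤ -2 * (t + d) :=
    mul_le_mul_of_nonneg_right (by linarith : c ≤ -2) (by linarith : (0:ℝ) ≤ t + d)
  have hctd : c * (t + d) + 1 < -1 := by linarith
  -- first component
  have h1 : |u + ↑b * β * v| = (t + d) * |v| := by
    have heq : u + ↑b * β * v = (t + d) * v := by rw [hueq, hddef]; ring
    rw [heq, abs_mul, abs_of_pos (by linarith : (0:ℝ) < t + d)]
  -- second component
  have h2 : |↑a * α * u + (1 + ↑a * α * (↑b * β)) * v| = (-(c * (t + d)) - 1) * |v| := by
    have heq : ↑a * α * u + (1 + ↑a * α * (↑b * β)) * v = (c * (t + d) + 1) * v := by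
      rw [hueq, hcdef, hddef]; ring
    rw [heq, abs_mul, abs_of_neg (by linarith : c * (t + d) + 1 < 0)]
    ring
  have hmax : max |u + ↑b * β * v| |↑a * α * u + (1 + ↑a * α * (↑b * β)) * v|
      = (-(c * (t + d)) - 1) * |v| := by
    rw [h1, h2]
    apply max_eq_right
    exact mul_le_mul_of_nonneg_right (by linarith) hv0.le
  rw [hmax, hden, mul_div_assoc, div_self (ne_of_gt hv0), mul_one]
  have hcneg : (0:ℝ) < -c := by linarith
  have hexp : -(c * (t + d)) - 1 = -(c * t) - c * d - 1 := by ring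
  constructor
  · have hΓt : (-c) * Γ ≤ (-c) * t := mul_le_mul_of_nonneg_left hc1 hcneg.le
    rw [show -(↑a * α * (↑b * β)) - ↑a * α * (-(β / 2) + s) - 1
        = -(c * d) - c * Γ - 1 by rw [hcdef, hddef, hΓ]]
    have h3 : (-c) * Γ = -(c * Γ) := by ring
    have h4 : (-c) * t = -(c * t) := by ring
    linarith [hexp]
  · have h5 : (-c) * t ≤ 0 := mul_nonpos_of_nonneg_of_nonpos hcneg.le hc2
    have h4 : (-c) * t = -(c * t) := by ring
    rw [show -(↑a * α * (↑b * β)) - 1 = -(c * d) - 1 by rw [hcdef, hddef]]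
    linarith [hexp]
end

section
/- Let α < −2, β > 2 and Γ = −β/2 + ((β/2)² + β/α)^{1/2}. For every vector X = (u,v) with v ≠ 0 and Γ ≤ u/v ≤ 0, and all positive integers a, b: ((Γ+bβ)² + (1+aαΓ+aαbβ)²)/(1+Γ²) ≤ ‖K_{ab}X‖₂² / ‖X‖₂² ≤ (1+aαbβ)² + b²β². -/
private lemma mnn {x y : ℝ} (hx : x ≤ 0) (hy : y ≤ 0) : 0 ≤ x * y := by nlinarith

private lemma aux_ratio (m c G t : ℝ) (hm : m < -2) (hc : 2 < c)
    (hG1 : -1 < G) (hG0 : G < 0) (ht1 : G ≤ t) (ht2 : t ≤ 0) :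
    ((G + c) ^ 2 + (1 + m * G + m * c) ^ 2) / (1 + G ^ 2) ≤
      ((t + c) ^ 2 + (m * t + (1 + m * c)) ^ 2) / (t ^ 2 + 1) ∧
    ((t + c) ^ 2 + (m * t + (1 + m * c)) ^ 2) / (t ^ 2 + 1) ≤
      (1 + m * c) ^ 2 + c ^ 2 := by
  have hE : 0 < c + m + m ^ 2 * c := by nlinarith
  have hc2' : (0:ℝ) < c ^ 2 - 2 := by nlinarith
  have hD : m ^ 2 - c ^ 2 - 2 * m * c - m ^ 2 * c ^ 2 < 0 := by
    nlinarith [sq_nonneg (m * (c ^ 2 - 1) + c),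
      mul_pos (mul_pos (show (0:ℝ) < c by linarith) (show (0:ℝ) < c by linarith)) hc2']
  have htg : 0 ≤ t * G := mnn ht2 hG0.le
  have htG1 : t * G ≤ 1 := by nlinarith [mul_nonneg (by linarith : (0:ℝ) ≤ 1 + t) (by linarith : (0:ℝ) ≤ -G)]
  have hden1 : (0:ℝ) < 1 + G ^ 2 := by positivity
  have hden2 : (0:ℝ) < t ^ 2 + 1 := by positivity
  constructor
  · rw [div_le_div_iff₀ hden1 hden2]
    have hfac2 : 0 ≤ (m ^ 2 - c ^ 2 - 2 * m * c - m ^ 2 * c ^ 2) * (t + G) +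
        2 * (c + m + m ^ 2 * c) * (1 - t * G) := by
      have h1 : 0 ≤ (m ^ 2 - c ^ 2 - 2 * m * c - m ^ 2 * c ^ 2) * (t + G) :=
        mnn hD.le (by linarith)
      have h2 : 0 ≤ 2 * (c + m + m ^ 2 * c) * (1 - t * G) := by
        have := mul_nonneg hE.le (by linarith : (0:ℝ) ≤ 1 - t * G)
        linarith
      linarith
    have hprod : 0 ≤ (t - G) * ((m ^ 2 - c ^ 2 - 2 * m * c - m ^ 2 * c ^ 2) * (t + G) +
        2 * (c + m + m ^ 2 * c) * (1 - t * G)) :=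
      mul_nonneg (by linarith) hfac2
    nlinarith [hprod]
  · rw [div_le_iff₀ hden2]
    have h1 : 0 ≤ (m ^ 2 - c ^ 2 - 2 * m * c - m ^ 2 * c ^ 2) * t :=
      mnn hD.le ht2
    have hprod : 0 ≤ (-t) * ((m ^ 2 - c ^ 2 - 2 * m * c - m ^ 2 * c ^ 2) * t +
        2 * (c + m + m ^ 2 * c)) :=
      mul_nonneg (by linarith) (by linarith)
    nlinarith [hprod]

/-- `L₂` bounds in the negative-shear case: for `α < -2`, `β > 2`,
`Γ = -β/2 + √((β/2)² + β/α)`, any `X = (u,v)` with `v ≠ 0` and `Γ ≤ u/v ≤ 0`, and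
positive integers `a, b`:
`((Γ+bβ)² + (1+aαΓ+aαbβ)²)/(1+Γ²) ≤ ‖K_{ab}X‖₂²/‖X‖₂² ≤ (1+aαbβ)² + b²β²`, where
`K_{ab}X = (u + bβv, aαu + (1 + aαbβ)v)` and `‖(u,v)‖₂² = u² + v²`. -/
theorem L2_bounds_rev (α β : ℝ) (hα : α < -2) (hβ : 2 < β)
    (a b : ℕ) (ha : 1 ≤ a) (hb : 1 ≤ b)
    (u v : ℝ) (hv : v ≠ 0)
    (hc1 : -(β / 2) + Real.sqrt ((β / 2) ^ 2 + β / α) ≤ u / v) (hc2 : u / v ≤ 0) :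
    (((-(β / 2) + Real.sqrt ((β / 2) ^ 2 + β / α)) + b * β) ^ 2 +
        (1 + a * α * (-(β / 2) + Real.sqrt ((β / 2) ^ 2 + β / α)) +
          a * α * (b * β)) ^ 2) /
        (1 + (-(β / 2) + Real.sqrt ((β / 2) ^ 2 + β / α)) ^ 2) ≤
      ((u + b * β * v) ^ 2 + (a * α * u + (1 + a * α * (b * β)) * v) ^ 2) /
        (u ^ 2 + v ^ 2) ∧
    ((u + b * β * v) ^ 2 + (a * α * u + (1 + a * α * (b * β)) * v) ^ 2) /
        (u ^ 2 + v ^ 2) ≤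
      (1 + a * α * (b * β)) ^ 2 + (b : ℝ) ^ 2 * β ^ 2 := by
  have hα0 : α < 0 := by linarith
  have hαne : α ≠ 0 := ne_of_lt hα0
  have hq : α * (β / α) = β := by field_simp
  have harg : 0 ≤ (β / 2) ^ 2 + β / α := by nlinarith [hq]
  set Γ := -(β / 2) + Real.sqrt ((β / 2) ^ 2 + β / α) with hΓ
  have hsq : Real.sqrt ((β / 2) ^ 2 + β / α) ^ 2 = (β / 2) ^ 2 + β / α :=
    Real.sq_sqrt harg
  have hG0 : Γ < 0 := by
    have h1 : β / α < 0 := div_neg_of_pos_of_neg (by linarith) hα0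
    have h2 : Real.sqrt ((β / 2) ^ 2 + β / α) < β / 2 :=
      (Real.sqrt_lt' (by linarith)).mpr (by linarith)
    rw [hΓ]; linarith
  have hG1 : -1 < Γ := by
    have hlt : (β / 2 - 1) ^ 2 < (β / 2) ^ 2 + β / α := by
      nlinarith [hq, mul_pos (show (0:ℝ) < β - 2 by linarith)
        (show (0:ℝ) < -α - 2 by linarith)]
    have h2 : β / 2 - 1 < Real.sqrt ((β / 2) ^ 2 + β / α) :=
      (Real.lt_sqrt (by linarith)).mpr hlt
    rw [hΓ]; linarith
  have haR : (1:ℝ) ≤ (a:ℝ) := by exact_mod_cast ha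
  have hbR : (1:ℝ) ≤ (b:ℝ) := by exact_mod_cast hb
  have hm : (a:ℝ) * α < -2 := by nlinarith
  have hc : 2 < (b:ℝ) * β := by nlinarith
  obtain ⟨h1, h2⟩ := aux_ratio ((a:ℝ) * α) ((b:ℝ) * β) Γ (u / v) hm hc hG1 hG0 hc1 hc2
  have hd1 : ((u / v) ^ 2 + 1) ≠ 0 := by positivity
  have hd2 : (u ^ 2 + v ^ 2) ≠ 0 := by positivity
  have heq : ((u / v + (b:ℝ) * β) ^ 2 +
      ((a:ℝ) * α * (u / v) + (1 + (a:ℝ) * α * ((b:ℝ) * β))) ^ 2) / ((u / v) ^ 2 + 1) =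
      ((u + (b:ℝ) * β * v) ^ 2 +
        ((a:ℝ) * α * u + (1 + (a:ℝ) * α * ((b:ℝ) * β)) * v) ^ 2) / (u ^ 2 + v ^ 2) := by
    rw [div_eq_div_iff hd1 hd2]
    field_simp
    try ring
  have hbb : ((b:ℝ) * β) ^ 2 = (b:ℝ) ^ 2 * β ^ 2 := by ring
  constructor
  · linarith [h1, heq.le, heq.ge]
  · linarith [h2, heq.le, heq.ge]
end

section
/- Let α < −2, β > 2, Γ = −β/2 + ((β/2)² + β/α)^{1/2}, and for m_a, m_b ∈ {1,2} let Γ_{m_a,m_b} = (Γ + m_bβ)/(m_aαΓ + m_am_bαβ + 1), so that Γ_{1,1} = Γ. Let C⁻ = {(u,v) : v ≠ 0, Γ ≤ u/v ≤ 0}. For positive integers a, b and (u,v) ∈ C⁻, write (u',v') = K_{ab}(u,v); then v' ≠ 0 and: (1) if a = b = 1, then Γ ≤ u'/v' ≤ β/(1+αβ); (2) if a ≥ 2 and b = 1, then Γ_{2,1} ≤ u'/v' ≤ 0; (3) if a = 1 and b ≥ 2, then Γ_{1,2} ≤ u'/v' ≤ 1/α; (4) if a ≥ 2 and b ≥ 2,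 then Γ_{2,2} ≤ u'/v' ≤ 0. -/
noncomputable section

def Gam (α β : ℝ) : ℝ := -(β / 2) + Real.sqrt ((β / 2) ^ 2 + β / α)

/-- `Γ_{m_a, m_b} = (Γ + m_bβ)/(m_aαΓ + m_am_bαβ + 1)`; note `Γ_{1,1} = Γ`. -/
def GamM (α β : ℝ) (ma mb : ℕ) : ℝ :=
  (Gam α β + mb * β) / (ma * α * Gam α β + ma * mb * (α * β) + 1)

lemma div_le_div_of_negs {N E X D : ℝ} (hE : E < 0) (hD : D < 0) (h : N * D ≤ X * E) :
    N / E ≤ X / D := by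
  rw [le_div_iff_of_neg hD, div_mul_eq_mul_div, le_div_iff_of_neg hE]
  exact h

set_option maxHeartbeats 2000000 in
/-- Cone improvement (negative-shear case): for `α < -2`, `β > 2`, `(u,v)` in the cone
`C⁻ = {Γ ≤ u/v ≤ 0, v ≠ 0}` and positive integers `a, b`, writing
`(u',v') = K_{ab}(u,v) = (u + bβv, aαu + (1 + aαbβ)v)`, one has `v' ≠ 0` and:
if `a = b = 1` then `Γ ≤ u'/v' ≤ β/(1+αβ)`;
if `a ≥ 2, b = 1` then `Γ_{2,1} ≤ u'/v' ≤ 0`;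
if `a = 1, b ≥ 2` then `Γ_{1,2} ≤ u'/v' ≤ 1/α`;
if `a ≥ 2, b ≥ 2` then `Γ_{2,2} ≤ u'/v' ≤ 0`. -/
theorem cone_improvement_rev (α β : ℝ) (hα : α < -2) (hβ : 2 < β)
    (a b : ℕ) (ha : 1 ≤ a) (hb : 1 ≤ b)
    (u v : ℝ) (hv : v ≠ 0)
    (hc1 : Gam α β ≤ u / v) (hc2 : u / v ≤ 0) :
    a * α * u + (1 + a * α * (b * β)) * v ≠ 0 ∧
    (a = 1 ∧ b = 1 →
      Gam α β ≤ (u + b * β * v) / (a * α * u + (1 + a * α * (b * β)) * v) ∧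
        (u + b * β * v) / (a * α * u + (1 + a * α * (b * β)) * v) ≤ β / (1 + α * β)) ∧
    (2 ≤ a ∧ b = 1 →
      GamM α β 2 1 ≤ (u + b * β * v) / (a * α * u + (1 + a * α * (b * β)) * v) ∧
        (u + b * β * v) / (a * α * u + (1 + a * α * (b * β)) * v) ≤ 0) ∧
    (a = 1 ∧ 2 ≤ b →
      GamM α β 1 2 ≤ (u + b * β * v) / (a * α * u + (1 + a * α * (b * β)) * v) ∧
        (u + b * β * v) / (a * α * u + (1 + a * α * (b * β)) * v) ≤ 1 / α) ∧
    (2 ≤ a ∧ 2 ≤ b →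
      GamM α β 2 2 ≤ (u + b * β * v) / (a * α * u + (1 + a * α * (b * β)) * v) ∧
        (u + b * β * v) / (a * α * u + (1 + a * α * (b * β)) * v) ≤ 0) := by
  have hα0 : α < 0 := by linarith
  have hβ0 : 0 < β := by linarith
  have hβα : β / α < 0 := div_neg_of_pos_of_neg hβ0 hα0
  have h2' : β / α + β / 2 = β * (α + 2) / (2 * α) := by field_simp [hα0.ne]; ring
  have h1' : 0 < β * (α + 2) / (2 * α) := div_pos_of_neg_of_neg (by nlinarith) (by linarith)
  have harg : 0 < (β / 2) ^ 2 + β / α := by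
    nlinarith [mul_pos hβ0 (show (0:ℝ) < β - 2 by linarith)]
  have hs2 : Real.sqrt ((β / 2) ^ 2 + β / α) ^ 2 = (β / 2) ^ 2 + β / α := Real.sq_sqrt harg.le
  have hspos : 0 < Real.sqrt ((β / 2) ^ 2 + β / α) := Real.sqrt_pos.mpr harg
  have hslt : Real.sqrt ((β / 2) ^ 2 + β / α) < β / 2 := by nlinarith
  set Γ := Gam α β with hΓdef
  have hΓneg : Γ < 0 := by rw [hΓdef]; simp only [Gam]; linarith
  have hΓgt : -(β / 2) < Γ := by rw [hΓdef]; simp only [Gam]; linarith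
  have h0 : Γ ^ 2 + β * Γ = β / α := by rw [hΓdef]; simp only [Gam]; linear_combination hs2
  rw [eq_div_iff (ne_of_lt hα0)] at h0
  have hq : α * Γ ^ 2 + α * β * Γ = β := by linear_combination h0
  have hαΓ : 1 < α * Γ := by nlinarith
  have ha1 : (1:ℝ) ≤ (a:ℝ) := by exact_mod_cast ha
  have hb1 : (1:ℝ) ≤ (b:ℝ) := by exact_mod_cast hb
  have hAα : (a:ℝ) * α ≤ α := by nlinarith
  have hBβ : β ≤ (b:ℝ) * β := by nlinarith
  set x := u / v with hxdef
  have hux : u = x * v := (div_mul_cancel₀ u hv).symm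
  have hΓβ1 : 1 < Γ + β := by linarith
  have hD : (a:ℝ) * α * x + (a:ℝ) * α * ((b:ℝ) * β) + 1 < 0 := by
    have hAneg : (a:ℝ) * α < -2 := by nlinarith
    have h1 : (a:ℝ) * α * x ≤ (a:ℝ) * α * Γ := mul_le_mul_of_nonpos_left hc1 (by nlinarith)
    have h2 : (a:ℝ) * α * ((b:ℝ) * β) ≤ (a:ℝ) * α * β := mul_le_mul_of_nonpos_left hBβ (by nlinarith)
    nlinarith [mul_lt_mul_of_pos_right hAneg (show (0:ℝ) < Γ + β by linarith)]
  have hden : (a:ℝ) * α * u + (1 + (a:ℝ) * α * ((b:ℝ) * β)) * v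
      = ((a:ℝ) * α * x + (a:ℝ) * α * ((b:ℝ) * β) + 1) * v := by rw [hux]; ring
  have hquot : (u + (b:ℝ) * β * v) / ((a:ℝ) * α * u + (1 + (a:ℝ) * α * ((b:ℝ) * β)) * v)
      = (x + (b:ℝ) * β) / ((a:ℝ) * α * x + (a:ℝ) * α * ((b:ℝ) * β) + 1) := by
    rw [hden, hux, show x * v + (b:ℝ) * β * v = (x + (b:ℝ) * β) * v from by ring]
    exact mul_div_mul_right _ _ hv
  have hnum : 0 < x + (b:ℝ) * β := by nlinarith
  refine ⟨by rw [hden]; exact mul_ne_zero (ne_of_lt hD) hv, ?_, ?_, ?_, ?_⟩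
  · rintro ⟨rfl, rfl⟩
    push_cast at hD hquot ⊢
    rw [hquot]
    constructor
    · rw [le_div_iff_of_neg (by linarith : 1 * α * x + 1 * α * (1 * β) + 1 < 0)]
      nlinarith [mul_nonneg (sub_nonneg.2 hc1) (show (0:ℝ) ≤ α * Γ - 1 by linarith)]
    · exact div_le_div_of_negs hD (by nlinarith : 1 + α * β < 0) (by nlinarith)
  · rintro ⟨ha2, rfl⟩
    push_cast at hD hquot ⊢
    rw [hquot]
    have ha2' : (2:ℝ) ≤ (a:ℝ) := by exact_mod_cast ha2
    have hA2 : (a:ℝ) * α ≤ 2 * α := by nlinarith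
    have hE : 2 * α * Γ + 2 * 1 * (α * β) + 1 < 0 := by nlinarith
    constructor
    · simp only [GamM, ← hΓdef]
      push_cast
      refine div_le_div_of_negs hE (by linarith) ?_
      nlinarith [mul_nonneg (mul_nonneg (sub_nonneg.2 hA2)
        (show (0:ℝ) ≤ Γ + β by linarith)) (show (0:ℝ) ≤ x + β by nlinarith)]
    · exact div_nonpos_of_nonneg_of_nonpos (by nlinarith) (by linarith)
  · rintro ⟨rfl, hb2⟩
    push_cast at hD hquot ⊢
    rw [hquot]
    have hb2' : (2:ℝ) ≤ (b:ℝ) := by exact_mod_cast hb2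
    have hB2 : 2 * β ≤ (b:ℝ) * β := by nlinarith
    have hE : 1 * α * Γ + 1 * 2 * (α * β) + 1 < 0 := by nlinarith
    constructor
    · simp only [GamM, ← hΓdef]
      push_cast
      refine div_le_div_of_negs hE (by linarith) ?_
      nlinarith
    · exact div_le_div_of_negs hD hα0 (by nlinarith)
  · rintro ⟨ha2, hb2⟩
    push_cast at hD hquot ⊢
    rw [hquot]
    have ha2' : (2:ℝ) ≤ (a:ℝ) := by exact_mod_cast ha2
    have hb2' : (2:ℝ) ≤ (b:ℝ) := by exact_mod_cast hb2
    have hA2 : (a:ℝ) * α ≤ 2 * α := by nlinarith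
    have hB2 : 2 * β ≤ (b:ℝ) * β := by nlinarith
    have hE : 2 * α * Γ + 2 * 2 * (α * β) + 1 < 0 := by nlinarith
    constructor
    · simp only [GamM, ← hΓdef]
      push_cast
      refine div_le_div_of_negs hE hD ?_
      nlinarith [mul_nonneg (mul_nonneg (sub_nonneg.2 hA2)
        (show (0:ℝ) ≤ Γ + 2 * β by linarith)) (show (0:ℝ) ≤ x + (b:ℝ) * β by linarith)]
    · exact div_nonpos_of_nonneg_of_nonpos hnum.le hD.le

end
end

section
/- Let X₀ = (u₀,v₀) satisfy v₀ > 0 and 0 ≤ u₀ ≤ v₀/α. Then for every J ≥ 1 and all positive integers a₁,…,a_J and b₁,…,b_J: ∏_{j=1}^J (1 + a_jα b_jβ) ≤ ‖K_{a_J b_J} ⋯ K_{a_1 b_1} X₀‖_∞ / ‖X₀‖_∞ ≤ ∏_{j=1}^J (1 + a_j + a_jα b_jβ). -/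
noncomputable section

/-- `K_{ab} = A^a B^b = [[1, bβ], [aα, 1 + aαbβ]]`. -/
def Kmat (α β : ℝ) (a b : ℕ) : Matrix (Fin 2) (Fin 2) ℝ :=
  !![1, b * β; a * α, 1 + a * α * (b * β)]

/-- The `L∞` norm on ℝ². -/
def nrmInf (x : Fin 2 → ℝ) : ℝ := max |x 0| |x 1|

lemma Kmat_mulVec (α β : ℝ) (a b : ℕ) (u v : ℝ) :
    (Kmat α β a b).mulVec ![u, v] =
      ![u + b * β * v, a * α * u + (1 + a * α * (b * β)) * v] := by
  funext i
  fin_cases i <;>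
    simp [Kmat, Matrix.mulVec, dotProduct, Fin.sum_univ_two] <;> ring

lemma key (α β : ℝ) (hα : 1 ≤ α) (hβ : 1 ≤ β) :
    ∀ (J : ℕ) (a b : Fin J → ℕ), (∀ j, 1 ≤ a j) → (∀ j, 1 ≤ b j) →
      ∀ (u v : ℝ), 0 < v → 0 ≤ u → α * u ≤ v →
      ∃ u' v', ((List.ofFn fun j => Kmat α β (a j) (b j)).reverse.prod).mulVec ![u, v]
          = ![u', v'] ∧ 0 ≤ u' ∧ 0 < v' ∧ α * u' ≤ v' ∧
        (∏ j : Fin J, (1 + a j * α * (b j * β))) * v ≤ v' ∧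
        v' ≤ (∏ j : Fin J, (1 + a j + a j * α * (b j * β))) * v := by
  intro J
  induction J with
  | zero =>
    intro a b ha hb u v hv hu huv
    exact ⟨u, v, by simp, hu, hv, huv, by simp, by simp⟩
  | succ J ih =>
    intro a b ha hb u v hv hu huv
    have ha0 : (1 : ℝ) ≤ a 0 := by exact_mod_cast ha 0
    have hb0 : (1 : ℝ) ≤ b 0 := by exact_mod_cast hb 0
    set u₁ : ℝ := u + b 0 * β * v with hu₁def
    set v₁ : ℝ := a 0 * α * u + (1 + a 0 * α * (b 0 * β)) * v with hv₁def
    have hαpos : (0 : ℝ) < α := lt_of_lt_of_le one_pos hα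
    have hau : (0:ℝ) ≤ (a 0 : ℝ) * α * u :=
      mul_nonneg (mul_nonneg (Nat.cast_nonneg _) hαpos.le) hu
    have hbv : (0:ℝ) < (b 0 : ℝ) * β * v :=
      mul_pos (mul_pos (lt_of_lt_of_le one_pos hb0) (lt_of_lt_of_le one_pos hβ)) hv
    have haα : α ≤ (a 0 : ℝ) * α := le_mul_of_one_le_left hαpos.le ha0
    have habv : (0:ℝ) < (a 0 : ℝ) * α * ((b 0 : ℝ) * β * v) :=
      mul_pos (lt_of_lt_of_le hαpos haα) hbv
    have hv₁ : 0 < v₁ := by rw [hv₁def]; nlinarith [hau, hbv, habv]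
    have hu₁ : 0 ≤ u₁ := by rw [hu₁def]; nlinarith [hu, hbv]
    have huv₁ : α * u₁ ≤ v₁ := by
      rw [hu₁def, hv₁def]
      nlinarith [mul_nonneg (sub_nonneg.2 haα) hu, mul_le_mul_of_nonneg_right haα hbv.le, hv]
    obtain ⟨u', v', heq, h1, h2, h3, h4, h5⟩ :=
      ih (fun j => a j.succ) (fun j => b j.succ) (fun j => ha _) (fun j => hb _) u₁ v₁ hv₁ hu₁ huv₁
    refine ⟨u', v', ?_, h1, h2, h3, ?_, ?_⟩
    · rw [List.ofFn_succ, List.reverse_cons, List.prod_append, List.prod_singleton,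
        ← Matrix.mulVec_mulVec, Kmat_mulVec, ← hu₁def, ← hv₁def]
      exact heq
    · rw [Fin.prod_univ_succ]
      have hprodpos : (0:ℝ) ≤ ∏ j : Fin J, (1 + (a j.succ) * α * ((b j.succ) * β)) := by
        apply Finset.prod_nonneg
        intro j _
        have h := mul_nonneg (mul_nonneg (Nat.cast_nonneg (a j.succ)) (zero_le_one.trans hα))
          (mul_nonneg (Nat.cast_nonneg (b j.succ)) (zero_le_one.trans hβ))
        nlinarith [h]
      calc (1 + a 0 * α * (b 0 * β)) * (∏ j : Fin J, (1 + (a j.succ) * α * ((b j.succ) * β))) * v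
          = (∏ j : Fin J, (1 + (a j.succ) * α * ((b j.succ) * β))) * ((1 + a 0 * α * (b 0 * β)) * v) := by ring
        _ ≤ (∏ j : Fin J, (1 + (a j.succ) * α * ((b j.succ) * β))) * v₁ := by
            apply mul_le_mul_of_nonneg_left _ hprodpos
            rw [hv₁def]; nlinarith [hau]
        _ ≤ v' := h4
    · rw [Fin.prod_univ_succ]
      have hprodpos : (0:ℝ) ≤ ∏ j : Fin J, (1 + (a j.succ) + (a j.succ) * α * ((b j.succ) * β)) := by
        apply Finset.prod_nonneg
        intro j _
        have h := mul_nonneg (mul_nonneg (Nat.cast_nonneg (a j.succ)) (zero_le_one.trans hα))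
          (mul_nonneg (Nat.cast_nonneg (b j.succ)) (zero_le_one.trans hβ))
        nlinarith [h]
      calc v' ≤ (∏ j : Fin J, (1 + (a j.succ) + (a j.succ) * α * ((b j.succ) * β))) * v₁ := h5
        _ ≤ (∏ j : Fin J, (1 + (a j.succ) + (a j.succ) * α * ((b j.succ) * β))) * ((1 + a 0 + a 0 * α * (b 0 * β)) * v) := by
            apply mul_le_mul_of_nonneg_left _ hprodpos
            have h := mul_le_mul_of_nonneg_left huv (Nat.cast_nonneg (a 0) : (0:ℝ) ≤ (a 0 : ℝ))
            rw [hv₁def]; nlinarith [h]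
        _ = (1 + a 0 + a 0 * α * (b 0 * β)) * (∏ j : Fin J, (1 + (a j.succ) + (a j.succ) * α * ((b j.succ) * β))) * v := by ring

/-- For `X₀` in the cone `C⁺` and all positive integers `a₁,…,a_J`, `b₁,…,b_J`:
`∏_j (1 + a_jα b_jβ) ≤ ‖K_{a_Jb_J}⋯K_{a_1b_1}X₀‖∞ / ‖X₀‖∞ ≤ ∏_j (1 + a_j + a_jα b_jβ)`. -/
theorem product_Linf_bounds (α β : ℝ) (hα : 1 ≤ α) (hβ : 1 ≤ β)
    (u₀ v₀ : ℝ) (hv₀ : 0 < v₀) (hu₀ : 0 ≤ u₀) (hu₁ : u₀ ≤ v₀ / α)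
    (J : ℕ) (hJ : 1 ≤ J) (a b : Fin J → ℕ) (ha : ∀ j, 1 ≤ a j) (hb : ∀ j, 1 ≤ b j) :
    (∏ j : Fin J, (1 + a j * α * (b j * β))) ≤
        nrmInf (((List.ofFn fun j => Kmat α β (a j) (b j)).reverse.prod).mulVec ![u₀, v₀]) /
          nrmInf ![u₀, v₀] ∧
      nrmInf (((List.ofFn fun j => Kmat α β (a j) (b j)).reverse.prod).mulVec ![u₀, v₀]) /
          nrmInf ![u₀, v₀] ≤
        ∏ j : Fin J, (1 + a j + a j * α * (b j * β)) := by
  have hαpos : (0 : ℝ) < α := lt_of_lt_of_le one_pos hα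
  have huv : α * u₀ ≤ v₀ := by
    rw [le_div_iff₀ hαpos] at hu₁; linarith
  obtain ⟨u', v', heq, h1, h2, h3, h4, h5⟩ :=
    key α β hα hβ J a b ha hb u₀ v₀ hv₀ hu₀ huv
  have hu'le : u' ≤ v' := by nlinarith [mul_le_mul_of_nonneg_right hα h1]
  have hule : u₀ ≤ v₀ := by nlinarith [mul_le_mul_of_nonneg_right hα hu₀]
  have hn0 : nrmInf ![u₀, v₀] = v₀ := by
    simp only [nrmInf, Matrix.cons_val_zero, Matrix.cons_val_one, Matrix.head_cons]
    rw [abs_of_nonneg hu₀, abs_of_pos hv₀, max_eq_right hule]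
  have hn1 : nrmInf (((List.ofFn fun j => Kmat α β (a j) (b j)).reverse.prod).mulVec ![u₀, v₀]) = v' := by
    rw [heq]
    simp only [nrmInf, Matrix.cons_val_zero, Matrix.cons_val_one, Matrix.head_cons]
    rw [abs_of_nonneg h1, abs_of_pos h2, max_eq_right hu'le]
  rw [hn0, hn1]
  constructor
  · rw [le_div_iff₀ hv₀]; exact h4
  · rw [div_le_iff₀ hv₀]; exact h5
end
end
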